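/- Let z ∈ ℝ³ \ {0} be identified with a quaternion with vanishing k-component, and suppose z⁰ + |z| > 0. Set x₀ = (z + |z|)/√(2(z⁰ + |z|)), a quaternion with vanishing k-component. Then for every φ ∈ ℝ, the quaternion x = x₀(cos φ + k sin φ) satisfies KS(x) = x·x* = z, where x* flips the sign of the k-component. -/

import Mathlib

/-- The conjugation flipping only the sign of the `k`-component. -/
def qstar (x : Quaternion ℝ) : Quaternion ℝ := ⟨x.re, x.imI, x.imJ, -x.imK⟩

/-- The Kustaanheimo–Stiefel map. -/
noncomputable def KS (x : Quaternion ℝ) : Quaternion ℝ := x * qstar x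

/-- The quaternion unit `k`. -/
def qk : Quaternion ℝ := ⟨0, 0, 0, 1⟩

/-!
`qstar` is an anti-automorphism of `ℍ` (conjugation by `k` composed with `star`), so
`KS (x * u) = x * KS u * qstar x`. For `u = cos φ + k sin φ` one has `qstar u = star u`, hence
`KS u = |u|² = 1` and the phase drops out. On quaternions with vanishing `k`-component `qstar` is
the identity, so `KS (z + |z|) = (z + |z|)²`, and the quadratic relation `z² = 2 z⁰ z - |z|²`
turns this into `2 (z⁰ + |z|) z`; the normalisation `1 / √(2 (z⁰ + |z|))` cancels that factor.
-/

open scoped Quaternion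

theorem Quaternion.mul_self_eq_smul_sub_normSq {R : Type*} [CommRing R] (a : ℍ[R]) :
    a * a = (2 * a.re) • a - ((Quaternion.normSq a : R) : ℍ[R]) := by
  have h := Quaternion.self_mul_star a
  rw [Quaternion.star_eq_two_re_sub, mul_sub, Quaternion.mul_coe_eq_smul] at h
  rw [← h, sub_sub_cancel]

@[simp] theorem qstar_re (x : Quaternion ℝ) : (qstar x).re = x.re := rfl

@[simp] theorem qstar_imI (x : Quaternion ℝ) : (qstar x).imI = x.imI := rfl

@[simp] theorem qstar_imJ (x : Quaternion ℝ) : (qstar x).imJ = x.imJ := rfl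

@[simp] theorem qstar_imK (x : Quaternion ℝ) : (qstar x).imK = -x.imK := rfl

@[simp] theorem qk_re : qk.re = 0 := rfl

@[simp] theorem qk_imI : qk.imI = 0 := rfl

@[simp] theorem qk_imJ : qk.imJ = 0 := rfl

@[simp] theorem qk_imK : qk.imK = 1 := rfl

theorem qstar_mul (x y : Quaternion ℝ) : qstar (x * y) = qstar y * qstar x := by
  ext <;>
    simp only [qstar_re, qstar_imI, qstar_imJ, qstar_imK, Quaternion.re_mul, Quaternion.imI_mul,
      Quaternion.imJ_mul, Quaternion.imK_mul] <;>
    ring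

theorem qstar_smul (c : ℝ) (x : Quaternion ℝ) : qstar (c • x) = c • qstar x := by
  ext <;> simp

theorem qstar_eq_self_of_imK_eq_zero {x : Quaternion ℝ} (hx : x.imK = 0) : qstar x = x := by
  ext <;> simp [hx]

theorem KS_mul (x y : Quaternion ℝ) : KS (x * y) = x * KS y * qstar x := by
  simp only [KS, qstar_mul, mul_assoc]

theorem KS_mul_of_KS_eq_one (x : Quaternion ℝ) {u : Quaternion ℝ} (hu : KS u = 1) :
    KS (x * u) = KS x := by
  rw [KS_mul, hu, mul_one, KS]

theorem KS_smul (c : ℝ) (x : Quaternion ℝ) : KS (c • x) = c ^ 2 • KS x := by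
  rw [KS, KS, qstar_smul, smul_mul_smul_comm, sq]

theorem KS_cos_add_sin_smul_qk (φ : ℝ) : KS (Real.cos φ + Real.sin φ • qk) = 1 := by
  ext <;> simp [KS, ← sq, mul_comm]

theorem KS_add_norm {z : Quaternion ℝ} (hz : z.imK = 0) :
    KS (z + (‖z‖ : Quaternion ℝ)) = (2 * (z.re + ‖z‖)) • z := by
  have hw : (z + (‖z‖ : Quaternion ℝ)).imK = 0 := by simp [hz]
  rw [KS, qstar_eq_self_of_imK_eq_zero hw, add_mul, mul_add, mul_add,
    Quaternion.mul_self_eq_smul_sub_normSq, Quaternion.normSq_eq_norm_mul_self,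
    Quaternion.mul_coe_eq_smul, Quaternion.coe_mul_eq_smul, ← Quaternion.coe_mul]
  module

theorem KS_preimage_general (z : Quaternion ℝ) (hz3 : z.imK = 0)
    (hzpos : 0 < z.re + ‖z‖) (φ : ℝ) :
    KS ((Real.sqrt (2 * (z.re + ‖z‖)))⁻¹ •
        ((z + ((‖z‖ : ℝ) : Quaternion ℝ)) *
          (((Real.cos φ : ℝ) : Quaternion ℝ) + Real.sin φ • qk))) = z := by
  have hscale : (Real.sqrt (2 * (z.re + ‖z‖)))⁻¹ ^ 2 = (2 * (z.re + ‖z‖))⁻¹ := by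
    rw [inv_pow, Real.sq_sqrt (by positivity)]
  rw [KS_smul, KS_mul_of_KS_eq_one _ (KS_cos_add_sin_smul_qk φ), KS_add_norm hz3, hscale,
    inv_smul_smul₀ (by positivity)]

/-- Every quaternion of the form `x₀(cos φ + k sin φ)`, with
`x₀ = (z + |z|)/√(2(z⁰ + |z|))`, is a preimage of `z ∈ ℝ³ \ {0}` under the
Kustaanheimo–Stiefel map. -/
theorem KS_preimage (z : Quaternion ℝ) (hz3 : z.imK = 0) (hz0 : z ≠ 0)
    (hzpos : 0 < z.re + ‖z‖) (φ : ℝ) :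
    KS ((Real.sqrt (2 * (z.re + ‖z‖)))⁻¹ •
        ((z + ((‖z‖ : ℝ) : Quaternion ℝ)) *
          (((Real.cos φ : ℝ) : Quaternion ℝ) + Real.sin φ • qk))) = z :=
  KS_preimage_general z hz3 hzpos φ
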